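/- Let α ∈ (0,1), β₁, β₂ ∈ (0,1] and 0 ≤ u, v < 1, and let G₂(β₁,β₂,α,-α;-u,-v) = Σ_{m,n≥0} (β₁)_m (β₂)_n (α)_{n-m} (-α)_{m-n} (-u)^m(-v)^n/(m!n!), where (α)_{n-m}(-α)_{m-n} = (-1)^{n-m}α/(α+n-m) for n ≠ m and = 1 for n = m. Then |G₂(β₁,β₂,α,-α;-u,-v) - 1| ≤ α·max(1/(1+α),1/(1-α))·Σ_{m≠n}(β₁)_m(β₂)_n u^m v^n/(m!n!) + Σ_{m≥1}(β₁)_m(β₂)_m (uv)^m/(m!)². -/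

import Mathlib

/-- The Pochhammer symbol `(a)ₙ` in `ℝ`. -/
noncomputable def rpoch (a : ℝ) (n : ℕ) : ℝ := ∏ i ∈ Finset.range n, (a + i)

/-- The generalized Pochhammer symbol `(a)ₖ := Γ(a+k)/Γ(a)` for integer `k`. -/
noncomputable def gpoch (a : ℝ) (k : ℤ) : ℝ := Real.Gamma (a + k) / Real.Gamma a

/-- The real Gauss hypergeometric series `₂F₁(a,b,c;x)`. -/
noncomputable def twoF1R (a b c x : ℝ) : ℝ :=
  ∑' n : ℕ, rpoch a n * rpoch b n / (rpoch c n * (n.factorial : ℝ)) * x ^ n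

/-- Appell's first hypergeometric series `F₁(a,b₁,b₂,c;x,y)`. -/
noncomputable def appellF1R (a b₁ b₂ c x y : ℝ) : ℝ :=
  ∑' p : ℕ × ℕ, rpoch a (p.1 + p.2) * rpoch b₁ p.1 * rpoch b₂ p.2 /
    (rpoch c (p.1 + p.2) * (p.1.factorial : ℝ) * (p.2.factorial : ℝ)) *
    x ^ p.1 * y ^ p.2

/-- Horn's hypergeometric series
`G₂(α,β,γ,δ;x,y) = Σ (α)ₘ(β)ₙ(γ)_{n-m}(δ)_{m-n} xᵐ yⁿ/(m!n!)`. -/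
noncomputable def hornG2 (α β γ δ x y : ℝ) : ℝ :=
  ∑' p : ℕ × ℕ, rpoch α p.1 * rpoch β p.2 *
    gpoch γ ((p.2 : ℤ) - (p.1 : ℤ)) * gpoch δ ((p.1 : ℤ) - (p.2 : ℤ)) *
    x ^ p.1 * y ^ p.2 / ((p.1.factorial : ℝ) * (p.2.factorial : ℝ))

/-! ### Auxiliary lemmas -/

lemma rpoch_zero (a : ℝ) : rpoch a 0 = 1 := by simp [rpoch]

lemma rpoch_succ (a : ℝ) (n : ℕ) : rpoch a (n + 1) = rpoch a n * (a + n) :=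
  Finset.prod_range_succ _ _

lemma rpoch_succ' (a : ℝ) (n : ℕ) : rpoch a (n + 1) = a * rpoch (a + 1) n := by
  unfold rpoch
  rw [Finset.prod_range_succ']
  have h0 : a + ((0 : ℕ) : ℝ) = a := by norm_num
  rw [h0, mul_comm]
  congr 1
  refine Finset.prod_congr rfl fun i _ => ?_
  push_cast
  ring

lemma rpoch_pos {a : ℝ} (ha : 0 < a) (n : ℕ) : 0 < rpoch a n :=
  Finset.prod_pos fun i _ => by positivity

lemma rpoch_nonneg {a : ℝ} (ha : 0 ≤ a) (n : ℕ) : 0 ≤ rpoch a n :=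
  Finset.prod_nonneg fun i _ => by positivity

lemma rpoch_one (n : ℕ) : rpoch 1 n = n.factorial := by
  induction n with
  | zero => simp [rpoch]
  | succ n ih =>
    rw [rpoch_succ, ih]
    push_cast [Nat.factorial_succ]
    ring

lemma rpoch_le_factorial {a : ℝ} (h0 : 0 ≤ a) (h1 : a ≤ 1) (n : ℕ) :
    rpoch a n ≤ (n.factorial : ℝ) := by
  rw [← rpoch_one]
  exact Finset.prod_le_prod (fun i _ => by positivity) (fun i _ => by linarith)

lemma rpoch_mul_add (a : ℝ) (n : ℕ) : rpoch a n * (a + n) = a * rpoch (a + 1) n := by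
  induction n with
  | zero => simp [rpoch]
  | succ n ih =>
    rw [rpoch_succ, rpoch_succ (a + 1)]
    push_cast
    linear_combination (a + (n : ℝ) + 1) * ih

lemma rpoch_reflect (a : ℝ) (n : ℕ) : rpoch (-a - n + 1) n = (-1) ^ n * rpoch a n := by
  unfold rpoch
  rw [← Finset.prod_range_reflect (fun j => (-a - n + 1 + j)) n]
  have : ((-1 : ℝ)) ^ n * ∏ i ∈ Finset.range n, (a + i)
      = ∏ i ∈ Finset.range n, (-1) * (a + i) := by
    rw [Finset.prod_mul_distrib, Finset.prod_const, Finset.card_range]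
  rw [this]
  refine Finset.prod_congr rfl fun i hi => ?_
  rw [Finset.mem_range] at hi
  have h1 : ((n - 1 - i : ℕ) : ℝ) = (n : ℝ) - 1 - i := by
    have h2 : n - 1 - i = n - (1 + i) := by omega
    rw [h2, Nat.cast_sub (by omega : 1 + i ≤ n)]
    push_cast
    ring
  rw [h1]; ring

lemma gamma_rpoch (a : ℝ) (n : ℕ) (h : ∀ i : ℕ, i < n → a + i ≠ 0) :
    Real.Gamma (a + n) = rpoch a n * Real.Gamma a := by
  induction n with
  | zero => simp [rpoch]
  | succ n ih =>
    have h1 : a + ((n + 1 : ℕ) : ℝ) = (a + n) + 1 := by push_cast; ring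
    rw [h1, Real.Gamma_add_one (h n (Nat.lt_succ_self n)),
      ih (fun i hi => h i (by omega)), rpoch_succ]
    ring

lemma gpoch_zero (a : ℝ) (ha : Real.Gamma a ≠ 0) : gpoch a 0 = 1 := by
  unfold gpoch
  norm_num [div_self ha]

lemma gpoch_nat (a : ℝ) (n : ℕ) (ha : Real.Gamma a ≠ 0) (h : ∀ i : ℕ, i < n → a + i ≠ 0) :
    gpoch a n = rpoch a n := by
  unfold gpoch
  rw [show a + ((n : ℤ) : ℝ) = a + n by push_cast; ring, gamma_rpoch a n h,
    mul_div_assoc, div_self ha, mul_one]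

lemma gpoch_neg_nat (a : ℝ) (n : ℕ) (ha : Real.Gamma a ≠ 0)
    (ha' : Real.Gamma (a - n) ≠ 0) (h : ∀ i : ℕ, i < n → a - n + i ≠ 0) :
    gpoch a (-(n : ℤ)) = 1 / rpoch (a - n) n := by
  have key : Real.Gamma a = rpoch (a - n) n * Real.Gamma (a - n) := by
    have h2 := gamma_rpoch (a - n) n h
    rw [sub_add_cancel] at h2
    exact h2
  have hr : rpoch (a - n) n ≠ 0 := by
    intro h0
    rw [h0, zero_mul] at key
    exact ha key
  unfold gpoch
  push_cast
  rw [show a + -(n : ℝ) = a - n by ring, key]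
  field_simp

lemma gamma_sub_nat_ne {α : ℝ} (h0 : 0 < α) (h1 : α < 1) (n : ℕ) :
    Real.Gamma (α - n) ≠ 0 := by
  apply Real.Gamma_ne_zero
  intro m hm
  rcases le_or_gt n m with h | h
  · have : (n : ℝ) ≤ m := by exact_mod_cast h
    linarith
  · have : (m : ℝ) + 1 ≤ n := by exact_mod_cast h
    linarith

lemma gamma_neg_sub_nat_ne {α : ℝ} (h0 : 0 < α) (h1 : α < 1) (n : ℕ) :
    Real.Gamma (-α - n) ≠ 0 := by
  apply Real.Gamma_ne_zero
  intro m hm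
  rcases le_or_gt m n with h | h
  · have : (m : ℝ) ≤ n := by exact_mod_cast h
    linarith
  · have : (n : ℝ) + 1 ≤ m := by exact_mod_cast h
    linarith

lemma gamma_neg_ne {α : ℝ} (h0 : 0 < α) (h1 : α < 1) : Real.Gamma (-α) ≠ 0 := by
  have := gamma_neg_sub_nat_ne h0 h1 0
  simpa using this

/-- The Horn `G₂(β₁,β₂,α,-α;-u,-v)` summand. -/
noncomputable def hterm (α β₁ β₂ u v : ℝ) (p : ℕ × ℕ) : ℝ :=
  rpoch β₁ p.1 * rpoch β₂ p.2 * gpoch α ((p.2 : ℤ) - (p.1 : ℤ)) *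
    gpoch (-α) ((p.1 : ℤ) - (p.2 : ℤ)) * (-u) ^ p.1 * (-v) ^ p.2 /
    ((p.1.factorial : ℝ) * (p.2.factorial : ℝ))

/-- The comparison (Appell `F₁(1,β₁,β₂,1)`) summand. -/
noncomputable def cterm (β₁ β₂ u v : ℝ) (p : ℕ × ℕ) : ℝ :=
  rpoch β₁ p.1 * rpoch β₂ p.2 / ((p.1.factorial : ℝ) * (p.2.factorial : ℝ)) *
    u ^ p.1 * v ^ p.2

lemma cterm_nonneg {β₁ β₂ u v : ℝ} (hβ₁ : 0 < β₁) (hβ₂ : 0 < β₂) (hu : 0 ≤ u) (hv : 0 ≤ v)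
    (p : ℕ × ℕ) : 0 ≤ cterm β₁ β₂ u v p := by
  unfold cterm
  have h1 := rpoch_nonneg hβ₁.le p.1
  have h2 := rpoch_nonneg hβ₂.le p.2
  have h3 : (0:ℝ) ≤ (p.1.factorial : ℝ) * (p.2.factorial : ℝ) := by positivity
  exact mul_nonneg (mul_nonneg (div_nonneg (mul_nonneg h1 h2) h3) (pow_nonneg hu _))
    (pow_nonneg hv _)

lemma cterm_summable {β₁ β₂ u v : ℝ} (hβ₁ : β₁ ∈ Set.Ioc (0:ℝ) 1) (hβ₂ : β₂ ∈ Set.Ioc (0:ℝ) 1)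
    (hu : u ∈ Set.Ico (0:ℝ) 1) (hv : v ∈ Set.Ico (0:ℝ) 1) :
    Summable (cterm β₁ β₂ u v) := by
  have hs1 : Summable (fun m : ℕ => rpoch β₁ m / (m.factorial : ℝ) * u ^ m) := by
    apply Summable.of_nonneg_of_le (g := fun m : ℕ => rpoch β₁ m / (m.factorial : ℝ) * u ^ m)
      (f := fun m : ℕ => u ^ m)
    · intro m
      have h1 := rpoch_nonneg hβ₁.1.le m
      exact mul_nonneg (div_nonneg h1 (by positivity)) (pow_nonneg hu.1 _)
    · intro m
      have h1 := rpoch_le_factorial hβ₁.1.le hβ₁.2 m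
      have h2 : (0:ℝ) < m.factorial := by exact_mod_cast m.factorial_pos
      have h3 : rpoch β₁ m / (m.factorial : ℝ) ≤ 1 := by
        rw [div_le_one h2]; exact h1
      calc rpoch β₁ m / (m.factorial : ℝ) * u ^ m ≤ 1 * u ^ m := by
            apply mul_le_mul_of_nonneg_right h3 (pow_nonneg hu.1 _)
        _ = u ^ m := one_mul _
    · exact summable_geometric_of_lt_one hu.1 hu.2
  have hs2 : Summable (fun n : ℕ => rpoch β₂ n / (n.factorial : ℝ) * v ^ n) := by
    apply Summable.of_nonneg_of_le (g := fun n : ℕ => rpoch β₂ n / (n.factorial : ℝ) * v ^ n)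
      (f := fun n : ℕ => v ^ n)
    · intro n
      have h1 := rpoch_nonneg hβ₂.1.le n
      exact mul_nonneg (div_nonneg h1 (by positivity)) (pow_nonneg hv.1 _)
    · intro n
      have h1 := rpoch_le_factorial hβ₂.1.le hβ₂.2 n
      have h2 : (0:ℝ) < n.factorial := by exact_mod_cast n.factorial_pos
      have h3 : rpoch β₂ n / (n.factorial : ℝ) ≤ 1 := by
        rw [div_le_one h2]; exact h1
      calc rpoch β₂ n / (n.factorial : ℝ) * v ^ n ≤ 1 * v ^ n := by
            apply mul_le_mul_of_nonneg_right h3 (pow_nonneg hv.1 _)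
        _ = v ^ n := one_mul _
    · exact summable_geometric_of_lt_one hv.1 hv.2
  have := hs1.mul_of_nonneg hs2
    (fun m => mul_nonneg (div_nonneg (rpoch_nonneg hβ₁.1.le m) (by positivity))
      (pow_nonneg hu.1 _))
    (fun n => mul_nonneg (div_nonneg (rpoch_nonneg hβ₂.1.le n) (by positivity))
      (pow_nonneg hv.1 _))
  apply this.congr
  intro p
  unfold cterm
  have h1 : (p.1.factorial : ℝ) ≠ 0 := by positivity
  have h2 : (p.2.factorial : ℝ) ≠ 0 := by positivity
  field_simp

/-- diagonal equivalence -/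
def diagEquiv : ℕ ≃ {p : ℕ × ℕ // p.1 = p.2} where
  toFun n := ⟨(n, n), rfl⟩
  invFun x := x.1.1
  left_inv n := rfl
  right_inv := fun ⟨⟨a, b⟩, h⟩ => by
    simp only at h
    subst h
    rfl

/-- Off-diagonal bound for the Pochhammer coefficient product. -/
lemma gprod_bound {α : ℝ} (h0 : 0 < α) (h1 : α < 1) {m n : ℕ} (hmn : m ≠ n) :
    |gpoch α ((n : ℤ) - m) * gpoch (-α) ((m : ℤ) - n)| ≤
      α * max (1 / (1 + α)) (1 / (1 - α)) := by
  have hΓα : Real.Gamma α ≠ 0 := (Real.Gamma_pos_of_pos h0).ne'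
  have hΓnα : Real.Gamma (-α) ≠ 0 := gamma_neg_ne h0 h1
  rcases lt_or_gt_of_ne hmn with h | h
  · -- m < n : k = n - m ≥ 1
    set k := n - m with hk
    have hk1 : 1 ≤ k := by omega
    have e0a : (n : ℤ) - m = (k : ℤ) := by omega
    have e0b : (m : ℤ) - n = -(k : ℤ) := by omega
    rw [e0a, e0b]
    have e1 : gpoch α (k : ℤ) = rpoch α k := by
      apply gpoch_nat _ _ hΓα
      intro i _
      positivity
    have e2 : gpoch (-α) (-(k : ℤ)) = 1 / rpoch (-α - k) k := by
      apply gpoch_neg_nat _ _ hΓnα (gamma_neg_sub_nat_ne h0 h1 k)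
      intro i hi
      have : (i : ℝ) + 1 ≤ k := by exact_mod_cast hi
      intro habs
      linarith
    have e3 : rpoch (-α - k) k = (-1) ^ k * rpoch (α + 1) k := by
      rw [show -α - (k : ℝ) = -(α + 1) - k + 1 by ring]
      exact rpoch_reflect _ _
    have hp1 : 0 < rpoch (α + 1) k := rpoch_pos (by linarith) k
    have hpα : 0 < rpoch α k := rpoch_pos h0 k
    have hαk : (0:ℝ) < α + k := by
      have : (1:ℝ) ≤ k := by exact_mod_cast hk1
      linarith
    rw [e1, e2, e3]
    have habs : |rpoch α k * (1 / ((-1) ^ k * rpoch (α + 1) k))| = α / (α + k) := by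
      rw [abs_mul, abs_of_pos hpα, abs_div, abs_one, abs_mul, abs_pow, abs_neg, abs_one,
        one_pow, one_mul, abs_of_pos hp1]
      have e4 := rpoch_mul_add α k
      rw [eq_div_iff hαk.ne']
      field_simp
      linarith [e4]
    rw [habs]
    have hk1' : (1:ℝ) ≤ k := by exact_mod_cast hk1
    calc α / (α + k) ≤ α / (1 + α) := by
          apply div_le_div_of_nonneg_left h0.le (by linarith) (by linarith)
      _ = α * (1 / (1 + α)) := by ring
      _ ≤ α * max (1 / (1 + α)) (1 / (1 - α)) := by
          apply mul_le_mul_of_nonneg_left (le_max_left _ _) h0.le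
  · -- n < m : k = m - n ≥ 1
    obtain ⟨j', hk⟩ : ∃ j', m - n = j' + 1 := ⟨m - n - 1, by omega⟩
    set k := j' + 1 with hkdef
    have hk1 : 1 ≤ k := by omega
    have hkval : k = m - n := by omega
    have e0a : (n : ℤ) - m = -(k : ℤ) := by omega
    have e0b : (m : ℤ) - n = (k : ℤ) := by omega
    rw [e0a, e0b]
    have e1 : gpoch (-α) (k : ℤ) = rpoch (-α) k := by
      apply gpoch_nat _ _ hΓnα
      intro i _
      rcases Nat.eq_zero_or_pos i with h' | h'
      · subst h'; simpa using h0.ne'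
      · have : (1:ℝ) ≤ i := by exact_mod_cast h'
        intro habs
        linarith
    have e2 : gpoch α (-(k : ℤ)) = 1 / rpoch (α - k) k := by
      apply gpoch_neg_nat _ _ hΓα (gamma_sub_nat_ne h0 h1 k)
      intro i hi
      have : (i : ℝ) + 1 ≤ k := by exact_mod_cast hi
      intro habs
      linarith
    have e3 : rpoch (α - k) k = (-1) ^ k * rpoch (1 - α) k := by
      rw [show α - (k : ℝ) = -(1 - α) - k + 1 by ring]
      exact rpoch_reflect _ _
    have hkj : k = j' + 1 := hkdef
    set j := j' with hjdef
    have e4 : rpoch (-α) (j + 1) = -α * rpoch (1 - α) j := by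
      rw [rpoch_succ']
      ring_nf
    have e5 : rpoch (1 - α) (j + 1) = rpoch (1 - α) j * (1 - α + j) := rpoch_succ _ _
    have hpj : 0 < rpoch (1 - α) j := rpoch_pos (by linarith) j
    have hαj : (0:ℝ) < 1 - α + j := by
      have : (0:ℝ) ≤ j := by positivity
      linarith
    rw [e2, e1, e3, e4, e5]
    have habs : |1 / ((-1) ^ (j + 1) * (rpoch (1 - α) j * (1 - α + j))) *
        (-α * rpoch (1 - α) j)| = α / (1 - α + j) := by
      rw [abs_mul, abs_div, abs_one, abs_mul, abs_pow, abs_neg, abs_one, one_pow, one_mul,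
        abs_mul, abs_mul, abs_neg, abs_of_pos h0, abs_of_pos hpj, abs_of_pos hαj]
      field_simp
    rw [habs]
    have hj0 : (0:ℝ) ≤ (j : ℝ) := Nat.cast_nonneg j
    calc α / (1 - α + j) ≤ α / (1 - α) := by
          apply div_le_div_of_nonneg_left h0.le (by linarith) (by linarith)
      _ = α * (1 / (1 - α)) := by ring
      _ ≤ α * max (1 / (1 + α)) (1 / (1 - α)) := by
          apply mul_le_mul_of_nonneg_left (le_max_right _ _) h0.le

lemma hterm_diag {α β₁ β₂ u v : ℝ} (h0 : 0 < α) (h1 : α < 1) (n : ℕ) :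
    hterm α β₁ β₂ u v (n, n) = cterm β₁ β₂ u v (n, n) := by
  have hΓα : Real.Gamma α ≠ 0 := (Real.Gamma_pos_of_pos h0).ne'
  have hΓnα : Real.Gamma (-α) ≠ 0 := gamma_neg_ne h0 h1
  unfold hterm cterm
  simp only [sub_self]
  rw [gpoch_zero _ hΓα, gpoch_zero _ hΓnα]
  have h2 : (-u) ^ n * (-v) ^ n = u ^ n * v ^ n := by
    rw [← mul_pow, neg_mul_neg, mul_pow]
  linear_combination (rpoch β₁ n * rpoch β₂ n / ((n.factorial : ℝ) * (n.factorial : ℝ))) * h2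

/-- Remainder estimate for Horn's `G₂`: for `α ∈ (0,1)`, `β₁, β₂ ∈ (0,1]`,
`u, v ∈ [0,1)`,
`|G₂(β₁,β₂,α,-α;-u,-v) - 1| ≤ α·max(1/(1+α),1/(1-α))·[F₁(1,β₁,β₂,1;u,v) -
₂F₁(β₁,β₂,1;uv)] + ₂F₁(β₁,β₂,1;uv) - 1`. -/
theorem stmt_18 (α β₁ β₂ u v : ℝ)
    (hα : α ∈ Set.Ioo (0:ℝ) 1) (hβ₁ : β₁ ∈ Set.Ioc (0:ℝ) 1) (hβ₂ : β₂ ∈ Set.Ioc (0:ℝ) 1)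
    (hu : u ∈ Set.Ico (0:ℝ) 1) (hv : v ∈ Set.Ico (0:ℝ) 1) :
    |hornG2 β₁ β₂ α (-α) (-u) (-v) - 1| ≤
      α * max (1 / (1 + α)) (1 / (1 - α)) *
        (appellF1R 1 β₁ β₂ 1 u v - twoF1R β₁ β₂ 1 (u * v)) +
      twoF1R β₁ β₂ 1 (u * v) - 1 := by
  obtain ⟨hα0, hα1⟩ := hα
  set K : ℝ := α * max (1 / (1 + α)) (1 / (1 - α)) with hK
  have hM0 : (0:ℝ) ≤ max (1 / (1 + α)) (1 / (1 - α)) :=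
    le_trans (by positivity : (0:ℝ) ≤ 1 / (1 + α)) (le_max_left _ _)
  have hK0 : 0 ≤ K := mul_nonneg hα0.le hM0
  -- summabilities
  have hc : Summable (cterm β₁ β₂ u v) := cterm_summable hβ₁ hβ₂ hu hv
  have hcnn : ∀ p, 0 ≤ cterm β₁ β₂ u v p := cterm_nonneg hβ₁.1 hβ₂.1 hu.1 hv.1
  -- |hterm| in terms of cterm
  have habs : ∀ p : ℕ × ℕ,
      |hterm α β₁ β₂ u v p| =
        |gpoch α ((p.2:ℤ) - p.1) * gpoch (-α) ((p.1:ℤ) - p.2)| * cterm β₁ β₂ u v p := by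
    intro p
    have e : hterm α β₁ β₂ u v p =
        gpoch α ((p.2:ℤ) - p.1) * gpoch (-α) ((p.1:ℤ) - p.2) * (-1 : ℝ) ^ (p.1 + p.2) *
          cterm β₁ β₂ u v p := by
      unfold hterm cterm
      rw [show (-u) ^ p.1 = (-1:ℝ) ^ p.1 * u ^ p.1 by rw [neg_pow],
        show (-v) ^ p.2 = (-1:ℝ) ^ p.2 * v ^ p.2 by rw [neg_pow]]
      ring
    rw [e, abs_mul, abs_mul, abs_pow, abs_neg, abs_one, one_pow, mul_one,
      abs_of_nonneg (hcnn p)]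
  have hbd : ∀ p : ℕ × ℕ, p.1 ≠ p.2 →
      |hterm α β₁ β₂ u v p| ≤ K * cterm β₁ β₂ u v p := by
    intro p hp
    rw [habs p]
    exact mul_le_mul_of_nonneg_right (gprod_bound hα0 hα1 hp) (hcnn p)
  have hbd' : ∀ p : ℕ × ℕ, |hterm α β₁ β₂ u v p| ≤ (K + 1) * cterm β₁ β₂ u v p := by
    intro p
    rcases eq_or_ne p.1 p.2 with hp | hp
    · have : p = (p.1, p.1) := by
        ext
        · rfl
        · exact hp.symm
      rw [this, hterm_diag hα0 hα1 p.1, abs_of_nonneg (hcnn _)]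
      nlinarith [hcnn (p.1, p.1), hK0]
    · calc |hterm α β₁ β₂ u v p| ≤ K * cterm β₁ β₂ u v p := hbd p hp
        _ ≤ (K + 1) * cterm β₁ β₂ u v p := by nlinarith [hcnn p, hK0]
  have hhabs : Summable (fun p => |hterm α β₁ β₂ u v p|) :=
    Summable.of_nonneg_of_le (fun p => abs_nonneg _) hbd' (hc.mul_left (K + 1))
  have hh : Summable (hterm α β₁ β₂ u v) := hhabs.of_abs
  -- the diagonal set
  set S : Set (ℕ × ℕ) := {p | p.1 = p.2} with hS
  have hdiagsum : ∀ g : ℕ × ℕ → ℝ, ∑' x : S, g ↑x = ∑' n : ℕ, g (n, n) := by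
    intro g
    exact (diagEquiv.tsum_eq fun x : {p : ℕ × ℕ // p.1 = p.2} => g ↑x).symm
  -- identification of the series
  have hhorn : hornG2 β₁ β₂ α (-α) (-u) (-v) = ∑' p, hterm α β₁ β₂ u v p := rfl
  have htwo : twoF1R β₁ β₂ 1 (u * v) = ∑' n : ℕ, cterm β₁ β₂ u v (n, n) := by
    unfold twoF1R cterm
    refine tsum_congr fun n => ?_
    rw [rpoch_one, mul_pow]
    ring
  have happ : appellF1R 1 β₁ β₂ 1 u v = ∑' p, cterm β₁ β₂ u v p := by
    unfold appellF1R cterm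
    refine tsum_congr fun p => ?_
    have h1 : rpoch 1 (p.1 + p.2) = ((p.1 + p.2).factorial : ℝ) := rpoch_one _
    have h2 : ((p.1 + p.2).factorial : ℝ) ≠ 0 := by
      exact_mod_cast (p.1 + p.2).factorial_pos.ne'
    have h3 : (p.1.factorial : ℝ) ≠ 0 := by exact_mod_cast p.1.factorial_pos.ne'
    have h4 : (p.2.factorial : ℝ) ≠ 0 := by exact_mod_cast p.2.factorial_pos.ne'
    rw [h1]
    field_simp
  -- splitting into diagonal and off-diagonal parts
  have hsplit_h : ∑' x : S, hterm α β₁ β₂ u v ↑x + ∑' x : ↥Sᶜ, hterm α β₁ β₂ u v ↑x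
      = ∑' p, hterm α β₁ β₂ u v p :=
    Summable.tsum_add_tsum_compl (hh.subtype S) (hh.subtype Sᶜ)
  have hsplit_c : ∑' x : S, cterm β₁ β₂ u v ↑x + ∑' x : ↥Sᶜ, cterm β₁ β₂ u v ↑x
      = ∑' p, cterm β₁ β₂ u v p :=
    Summable.tsum_add_tsum_compl (hc.subtype S) (hc.subtype Sᶜ)
  have hdiag_h : ∑' x : S, hterm α β₁ β₂ u v ↑x = twoF1R β₁ β₂ 1 (u * v) := by
    rw [hdiagsum, htwo]
    exact tsum_congr fun n => hterm_diag hα0 hα1 n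
  have hdiag_c : ∑' x : S, cterm β₁ β₂ u v ↑x = twoF1R β₁ β₂ 1 (u * v) := by
    rw [hdiagsum, htwo]
  -- off-diagonal sums
  set B : ℝ := ∑' x : ↥Sᶜ, hterm α β₁ β₂ u v ↑x with hB
  set C : ℝ := ∑' x : ↥Sᶜ, cterm β₁ β₂ u v ↑x with hC
  have happC : appellF1R 1 β₁ β₂ 1 u v - twoF1R β₁ β₂ 1 (u * v) = C := by
    rw [happ, ← hsplit_c, hdiag_c]
    ring
  have hhornB : hornG2 β₁ β₂ α (-α) (-u) (-v) = twoF1R β₁ β₂ 1 (u * v) + B := by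
    rw [hhorn, ← hsplit_h, hdiag_h]
  -- T - 1 ≥ 0
  have hdsum : Summable (fun n : ℕ => cterm β₁ β₂ u v (n, n)) :=
    hc.comp_injective (fun a b h => by
      have := congrArg Prod.fst h
      simpa using this)
  have hT1 : 1 ≤ twoF1R β₁ β₂ 1 (u * v) := by
    have h00 : cterm β₁ β₂ u v (0, 0) = 1 := by
      simp [cterm, rpoch_zero]
    rw [htwo, ← h00]
    exact Summable.le_tsum hdsum 0 fun j _ => hcnn (j, j)
  -- bound on B
  have hBbound : |B| ≤ K * C := by
    have h1 : |B| ≤ ∑' x : ↥Sᶜ, |hterm α β₁ β₂ u v ↑x| := by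
      simpa [Real.norm_eq_abs] using norm_tsum_le_tsum_norm
        (f := fun x : ↥Sᶜ => hterm α β₁ β₂ u v ↑x)
        (by have := hhabs.subtype Sᶜ; simp only [Function.comp_def] at this; exact this)
    have h2 : ∑' x : ↥Sᶜ, |hterm α β₁ β₂ u v ↑x| ≤ ∑' x : ↥Sᶜ, K * cterm β₁ β₂ u v ↑x := by
      refine Summable.tsum_le_tsum (fun x => ?_) (by have := hhabs.subtype Sᶜ; simp only [Function.comp_def] at this; exact this)
        (by have := (hc.mul_left K).subtype Sᶜ; simp only [Function.comp_def] at this; exact this)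
      exact hbd x.1 x.2
    have h3 : ∑' x : ↥Sᶜ, K * cterm β₁ β₂ u v ↑x = K * C := tsum_mul_left
    linarith
  -- conclusion
  rw [hhornB, happC]
  have : |twoF1R β₁ β₂ 1 (u * v) + B - 1| ≤ |B| + (twoF1R β₁ β₂ 1 (u * v) - 1) := by
    have := abs_add_le B (twoF1R β₁ β₂ 1 (u * v) - 1)
    rw [abs_of_nonneg (by linarith : (0:ℝ) ≤ twoF1R β₁ β₂ 1 (u * v) - 1)] at this
    calc |twoF1R β₁ β₂ 1 (u * v) + B - 1| = |B + (twoF1R β₁ β₂ 1 (u * v) - 1)| := by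
          ring_nf
      _ ≤ |B| + (twoF1R β₁ β₂ 1 (u * v) - 1) := this
  linarith
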